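/- Let n ≥ 3, s ∈ (0,2), and f : ℝ^n₋ → ℝ a nonnegative measurable function with f(x) ≤ C(1+|x|)^{−α(2*−1)} where α < n−2 is close enough to n−2 that α(2*−1) + s > n. Then for y ∈ ℝ^n₋ with |y| large, ∫_{ℝ^n₋ ∩ {|y−z| ≥ |y|/2}} |y−z|^{2−n} f(z)/|z|^s dz ≤ C'|y|^{2−n}, and ∫_{ℝ^n₋ ∩ {|y−z| < |y|/2}} |y−z|^{2−n} f(z)/|z|^s dz ≤ C''|y|^{2−n}·|y|^{n−s−α(2*−1)} = o(|y|^{2−n}). -/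

import Mathlib

open MeasureTheory Filter Metric Set
open scoped Topology ENNReal NNReal

noncomputable section

abbrev Evec (n : ℕ) := EuclideanSpace ℝ (Fin n)

/-- Laplacian with minus sign convention: `Δ = -∑ ∂ᵢᵢ`. -/
noncomputable def lap {n : ℕ} (f : Evec n → ℝ) (x : Evec n) : ℝ :=
  -∑ i : Fin n, fderiv ℝ (fun y => fderiv ℝ f y (EuclideanSpace.single i 1)) x
      (EuclideanSpace.single i 1)

/-- Smooth functions compactly supported inside `Ω`. -/
def IsTestFun {n : ℕ} (Ω : Set (Evec n)) (u : Evec n → ℝ) : Prop :=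
  ContDiff ℝ (⊤ : ℕ∞) u ∧ HasCompactSupport u ∧ tsupport u ⊆ Ω

/-- `u ∈ H¹₀(Ω)`: `u` is a limit of test functions in the `H¹` norm. -/
def MemH10 {n : ℕ} (Ω : Set (Evec n)) (u : Evec n → ℝ) : Prop :=
  ∃ v : ℕ → Evec n → ℝ, (∀ k, IsTestFun Ω (v k)) ∧
    Tendsto (fun k => ∫ x in Ω,
      (‖gradient (v k) x - gradient u x‖ ^ 2 + (v k x - u x) ^ 2)) atTop (𝓝 0)

/-- Dirichlet-type energy `∫_Ω (|∇u|² + a u²)`. -/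
noncomputable def energy {n : ℕ} (a : Evec n → ℝ) (Ω : Set (Evec n)) (u : Evec n → ℝ) : ℝ :=
  ∫ x in Ω, (‖gradient u x‖ ^ 2 + a x * u x ^ 2)

/-- Hardy–Sobolev norm `(∫_Ω |u|^q/|x|^s)^{2/q}`. -/
noncomputable def hsNorm {n : ℕ} (Ω : Set (Evec n)) (s q : ℝ) (u : Evec n → ℝ) : ℝ :=
  (∫ x in Ω, |u x| ^ q / ‖x‖ ^ s) ^ (2 / q)

/-- Hardy–Sobolev quotient. -/
noncomputable def hsQuot {n : ℕ} (a : Evec n → ℝ) (Ω : Set (Evec n)) (s q : ℝ)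
    (u : Evec n → ℝ) : ℝ :=
  energy a Ω u / hsNorm Ω s q u

/-- Hardy–Sobolev best constant `μ_{s,a}(Ω)` (with exponent `q`). -/
noncomputable def hsMu {n : ℕ} (a : Evec n → ℝ) (Ω : Set (Evec n)) (s q : ℝ) : ℝ :=
  sInf (hsQuot a Ω s q '' {u | MemH10 Ω u ∧ u ≠ 0})

/-- The half-space `ℝⁿ₋ = {x : x₁ < 0}`. -/
def negHalf (n : ℕ) [NeZero n] : Set (Evec n) := {x | x 0 < 0}

/-- Coercivity of `Δ + a` on `Ω`. -/
def CoerciveOn {n : ℕ} (a : Evec n → ℝ) (Ω : Set (Evec n)) : Prop :=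
  ∃ c : ℝ, 0 < c ∧ ∀ u, IsTestFun Ω u → c * ∫ x in Ω, u x ^ 2 ≤ energy a Ω u

/-- `u` is a weak solution of `Δu + a u = f` in `Ω`. -/
def WeakSol {n : ℕ} (Ω : Set (Evec n)) (a f : Evec n → ℝ) (u : Evec n → ℝ) : Prop :=
  ∀ ψ, IsTestFun Ω ψ →
    ∫ x in Ω, ((inner ℝ (gradient u x) (gradient ψ x) : ℝ) + a x * u x * ψ x) =
      ∫ x in Ω, f x * ψ x

/-- `∂Ω` near `0` is the graph `{x₁ = φ₀(x')}` with `Ω = {x₁ < φ₀(x')}` locally,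
`φ₀` smooth, `φ₀(0) = 0`, `∇φ₀(0) = 0`, `φ₀` not depending on the first variable. -/
def SmoothBdryAtZero {n : ℕ} [NeZero n] (Ω : Set (Evec n)) (φ₀ : Evec n → ℝ) (δ : ℝ) : Prop :=
  0 < δ ∧ ContDiff ℝ (⊤ : ℕ∞) φ₀ ∧ φ₀ 0 = 0 ∧ fderiv ℝ φ₀ 0 = 0 ∧
    (∀ x y : Evec n, (∀ i : Fin n, i ≠ 0 → x i = y i) → φ₀ x = φ₀ y) ∧
    ∀ x ∈ ball (0 : Evec n) δ, (x ∈ Ω ↔ x 0 < φ₀ x)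

/-- Mean curvature of the graph boundary at `0`: `H(0) = -∑_{i≥2} ∂ᵢᵢφ₀(0)`. -/
noncomputable def meanCurvZero {n : ℕ} [NeZero n] (φ₀ : Evec n → ℝ) : ℝ :=
  -∑ i : Fin n, if i = 0 then 0 else
    fderiv ℝ (fun y => fderiv ℝ φ₀ y (EuclideanSpace.single i 1)) 0 (EuclideanSpace.single i 1)

/-- `a_ε → a` in `C¹` on compact subsets of `U`, as `ε → 0⁺`. -/
def C1ConvOn {n : ℕ} (U : Set (Evec n)) (aε : ℝ → Evec n → ℝ) (a : Evec n → ℝ) : Prop :=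
  ∀ K, K ⊆ U → IsCompact K →
    TendstoUniformlyOn (fun ε => aε ε) a (𝓝[>] (0 : ℝ)) K ∧
    TendstoUniformlyOn (fun ε x => fderiv ℝ (aε ε) x)
      (fun x => fderiv ℝ a x) (𝓝[>] (0 : ℝ)) K


section GreenAux
open Real

lemma aux_integrableOn_rpow_ball (n : ℕ) [NeZero n] {t : ℝ} (ht0 : 0 < t) (htn : t < n) :
    IntegrableOn (fun x : Evec n => ‖x‖ ^ (-t)) (ball (0 : Evec n) 1) volume := by
  have hfin : Module.finrank ℝ (Evec n) = n := finrank_euclideanSpace_fin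
  have hm : Measurable fun x : Evec n => ‖x‖ ^ (-t) := by fun_prop
  set μ := volume.restrict (ball (0 : Evec n) 1) with hμ
  refine ⟨hm.aestronglyMeasurable, ?_⟩
  have hnn : ∀ x : Evec n, 0 ≤ ‖x‖ ^ (-t) := fun x => rpow_nonneg (norm_nonneg x) _
  have : (∫⁻ a : Evec n, ‖‖a‖ ^ (-t)‖ₑ ∂μ) = ∫⁻ a : Evec n, ENNReal.ofReal (‖a‖ ^ (-t)) ∂μ :=
    lintegral_enorm_of_nonneg fun a => hnn a
  rw [HasFiniteIntegral, ← hμ, this,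
    lintegral_eq_lintegral_meas_le μ (Eventually.of_forall hnn) hm.aemeasurable]
  set B := volume (ball (0 : Evec n) 1) with hB
  have hBfin : B < ∞ := measure_ball_lt_top
  calc
    ∫⁻ u in Ioi 0, μ {a : Evec n | u ≤ ‖a‖ ^ (-t)}
        ≤ ∫⁻ u in Ioc 0 1 ∪ Ioi 1, μ {a : Evec n | u ≤ ‖a‖ ^ (-t)} :=
      lintegral_mono_set Ioi_subset_Ioc_union_Ioi
    _ ≤ (∫⁻ u in Ioc 0 1, μ {a : Evec n | u ≤ ‖a‖ ^ (-t)})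
        + ∫⁻ u in Ioi 1, μ {a : Evec n | u ≤ ‖a‖ ^ (-t)} := lintegral_union_le _ _ _
    _ < ∞ := ENNReal.add_lt_top.2 ⟨?_, ?_⟩
  · calc
      ∫⁻ u in Ioc 0 1, μ {a : Evec n | u ≤ ‖a‖ ^ (-t)} ≤ ∫⁻ _ in Ioc (0:ℝ) 1, B := by
        refine lintegral_mono fun u => ?_
        calc μ {a : Evec n | u ≤ ‖a‖ ^ (-t)} ≤ μ univ := measure_mono (subset_univ _)
        _ ≤ B := by rw [hμ, Measure.restrict_apply_univ]
      _ < ∞ := by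
        rw [setLIntegral_const]
        exact ENNReal.mul_lt_top hBfin (by simp [Real.volume_Ioc])
  · have hsub : ∀ u : ℝ, u ∈ Ioi (1:ℝ) →
        μ {a : Evec n | u ≤ ‖a‖ ^ (-t)} ≤ ENNReal.ofReal ((u ^ (-t⁻¹)) ^ n) * B := by
      intro u hu
      have hu0 : (0:ℝ) < u := lt_trans one_pos hu
      have hsub2 : {a : Evec n | u ≤ ‖a‖ ^ (-t)} ⊆ closedBall 0 (u ^ (-t⁻¹)) := by
        intro a ha
        simp only [mem_setOf_eq] at ha
        rcases eq_or_lt_of_le (norm_nonneg a) with h0 | h0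
        · simp [mem_closedBall_zero_iff, ← h0]
          positivity
        · rw [mem_closedBall_zero_iff]
          have : ‖a‖ ≤ u ^ (-t)⁻¹ :=
            (Real.le_rpow_inv_iff_of_neg h0 hu0 (by linarith)).2 ha
          rwa [inv_neg] at this
      calc μ {a : Evec n | u ≤ ‖a‖ ^ (-t)} ≤ volume {a : Evec n | u ≤ ‖a‖ ^ (-t)} :=
            Measure.restrict_le_self _
        _ ≤ volume (closedBall (0 : Evec n) (u ^ (-t⁻¹))) := measure_mono hsub2
        _ = ENNReal.ofReal ((u ^ (-t⁻¹)) ^ n) * B := by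
            rw [Measure.addHaar_closedBall _ _ (by positivity), hfin]
    calc
      ∫⁻ u in Ioi 1, μ {a : Evec n | u ≤ ‖a‖ ^ (-t)}
          ≤ ∫⁻ u in Ioi 1, ENNReal.ofReal ((u ^ (-t⁻¹)) ^ n) * B :=
        setLIntegral_mono' measurableSet_Ioi hsub
      _ = (∫⁻ u in Ioi 1, ENNReal.ofReal ((u ^ (-t⁻¹)) ^ n)) * B :=
        lintegral_mul_const' _ _ hBfin.ne
      _ < ∞ := by
        refine ENNReal.mul_lt_top ?_ hBfin
        have hexp : -t⁻¹ * n < -1 := by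
          have h1 : (1:ℝ) < t⁻¹ * n := by
            rw [lt_inv_mul_iff₀ ht0]; simpa using htn
          nlinarith
        have hint : IntegrableOn (fun u : ℝ => u ^ (-t⁻¹ * n)) (Ioi (1:ℝ)) :=
          integrableOn_Ioi_rpow_of_lt hexp one_pos
        have heq : ∀ u : ℝ, u ∈ Ioi (1:ℝ) →
            ENNReal.ofReal ((u ^ (-t⁻¹)) ^ n) = ENNReal.ofReal (u ^ (-t⁻¹ * n)) := by
          intro u hu
          have hu0 : (0:ℝ) ≤ u := by have := lt_trans one_pos (show (1:ℝ) < u from hu); linarith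
          rw [← Real.rpow_natCast (u ^ (-t⁻¹)) n, ← Real.rpow_mul hu0]
        rw [setLIntegral_congr_fun measurableSet_Ioi heq]
        exact hint.setLIntegral_lt_top

lemma aux_integrableOn_rpow_ball' (n : ℕ) [NeZero n] {t : ℝ} (ht0 : 0 < t) (htn : t < n)
    (r : ℝ) : IntegrableOn (fun x : Evec n => ‖x‖ ^ (-t)) (ball (0 : Evec n) r) volume := by
  have h1 := aux_integrableOn_rpow_ball n ht0 htn
  rcases le_or_gt r 1 with h | h
  · exact h1.mono_set (ball_subset_ball h)
  · have hball : ball (0:Evec n) r = ball 0 1 ∪ (ball 0 r \ ball 0 1) :=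
      (union_diff_cancel (ball_subset_ball h.le)).symm
    rw [hball]
    refine h1.union ?_
    refine Integrable.mono' (g := fun _ => (1:ℝ))
      (integrableOn_const ((measure_mono diff_subset).trans_lt measure_ball_lt_top).ne)
      ((by fun_prop : Measurable fun x : Evec n => ‖x‖ ^ (-t)).aestronglyMeasurable) ?_
    refine (ae_restrict_iff' (measurableSet_ball.diff measurableSet_ball)).2
      (ae_of_all _ fun x hx => ?_)
    have h1x : 1 ≤ ‖x‖ := by
      have := hx.2; rwa [mem_ball_zero_iff, not_lt] at this
    rw [Real.norm_eq_abs, abs_of_nonneg (rpow_nonneg (norm_nonneg x) _)]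
    exact Real.rpow_le_one_of_one_le_of_nonpos h1x (by linarith)

lemma aux_g_integrable (n : ℕ) [NeZero n] {β s : ℝ} (hβ : 0 < β) (hs0 : 0 < s) (hsn : s < n)
    (hβs : (n:ℝ) < β + s) :
    Integrable (fun z : Evec n => (1 + ‖z‖) ^ (-β) * ‖z‖ ^ (-s)) volume := by
  have hmeas : Measurable fun z : Evec n => (1 + ‖z‖) ^ (-β) * ‖z‖ ^ (-s) := by fun_prop
  rw [← integrableOn_univ, ← union_compl_self (ball (0:Evec n) 1)]
  refine IntegrableOn.union ?_ ?_
  · refine Integrable.mono' (aux_integrableOn_rpow_ball n hs0 hsn)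
      hmeas.aestronglyMeasurable (ae_of_all _ fun z => ?_)
    rw [Real.norm_eq_abs, abs_of_nonneg (by positivity)]
    calc (1 + ‖z‖) ^ (-β) * ‖z‖ ^ (-s) ≤ 1 * ‖z‖ ^ (-s) := by
          gcongr
          exact Real.rpow_le_one_of_one_le_of_nonpos (by linarith [norm_nonneg z]) (by linarith)
      _ = ‖z‖ ^ (-s) := one_mul _
  · have hfin : Module.finrank ℝ (Evec n) = n := finrank_euclideanSpace_fin
    have hint : Integrable (fun z : Evec n => (2:ℝ) ^ s * (1 + ‖z‖) ^ (-(β + s))) volume := by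
      refine Integrable.const_mul ?_ _
      exact integrable_one_add_norm (by rw [hfin]; exact hβs)
    refine Integrable.mono' hint.integrableOn hmeas.aestronglyMeasurable ?_
    refine (ae_restrict_iff' measurableSet_ball.compl).2 (ae_of_all _ fun z hz => ?_)
    have h1z : 1 ≤ ‖z‖ := by rwa [mem_compl_iff, mem_ball_zero_iff, not_lt] at hz
    have hz0 : (0:ℝ) < ‖z‖ := by linarith
    rw [Real.norm_eq_abs, abs_of_nonneg (by positivity)]
    have key : ‖z‖ ^ (-s) ≤ 2 ^ s * (1 + ‖z‖) ^ (-s) := by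
      have h2 : ((2:ℝ) * ‖z‖) ^ (-s) ≤ (1 + ‖z‖) ^ (-s) :=
        Real.rpow_le_rpow_of_nonpos (by linarith) (by linarith) (by linarith)
      have h3 : ((2:ℝ) * ‖z‖) ^ (-s) = 2 ^ (-s) * ‖z‖ ^ (-s) :=
        Real.mul_rpow (by norm_num) (norm_nonneg z)
      have h4 : (0:ℝ) < 2 ^ s := by positivity
      rw [h3] at h2
      calc ‖z‖ ^ (-s) = 2 ^ s * (2 ^ (-s) * ‖z‖ ^ (-s)) := by
            rw [← mul_assoc, ← Real.rpow_add (by norm_num : (0:ℝ) < 2)]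
            simp
        _ ≤ 2 ^ s * (1 + ‖z‖) ^ (-s) := by gcongr
    calc (1 + ‖z‖) ^ (-β) * ‖z‖ ^ (-s) ≤ (1 + ‖z‖) ^ (-β) * (2 ^ s * (1 + ‖z‖) ^ (-s)) := by
          gcongr
      _ = 2 ^ s * (1 + ‖z‖) ^ (-(β + s)) := by
          rw [neg_add, Real.rpow_add (by positivity : (0:ℝ) < 1 + ‖z‖)]
          ring

lemma aux_kernel_ball (n : ℕ) [NeZero n] (hn : 3 ≤ n) (y : Evec n) {r : ℝ} (hr : 0 < r) :
    IntegrableOn (fun z : Evec n => ‖y - z‖ ^ ((2:ℝ) - n)) (ball y r) volume ∧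
    ∫ z in ball y r, ‖y - z‖ ^ ((2:ℝ) - n) =
      r ^ (2:ℝ) * ∫ w in ball (0:Evec n) 1, ‖w‖ ^ ((2:ℝ) - n) := by
  have hfin : Module.finrank ℝ (Evec n) = n := finrank_euclideanSpace_fin
  have hexp : (2:ℝ) - n = -((n:ℝ) - 2) := by ring
  have hn3 : (3:ℝ) ≤ n := by exact_mod_cast hn
  have hint : ∀ ρ : ℝ, IntegrableOn (fun x : Evec n => ‖x‖ ^ ((2:ℝ) - n))
      (ball (0 : Evec n) ρ) volume := by
    intro ρ
    rw [hexp]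
    exact aux_integrableOn_rpow_ball' n (by linarith) (by linarith) ρ
  have hpre : (fun z : Evec n => y - z) ⁻¹' (ball (0:Evec n) r) = ball y r := by
    ext z
    simp only [mem_preimage, mem_ball_zero_iff, mem_ball, dist_eq_norm, norm_sub_rev z y,
      sub_zero]
  have mp : MeasurePreserving (fun z : Evec n => y - z) volume volume :=
    Measure.measurePreserving_sub_left volume y
  have emb : MeasurableEmbedding (fun z : Evec n => y - z) :=
    (MeasurableEquiv.subLeft y).measurableEmbedding
  have mp' : MeasurePreserving (fun z : Evec n => y - z)
      (volume.restrict (ball y r)) (volume.restrict (ball (0:Evec n) r)) := by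
    rw [← hpre]
    exact mp.restrict_preimage measurableSet_ball
  have hint' : IntegrableOn (fun z : Evec n => ‖y - z‖ ^ ((2:ℝ) - n)) (ball y r) volume := by
    have := (mp'.integrable_comp_emb emb).2 (hint r)
    exact this
  refine ⟨hint', ?_⟩
  have htrans : ∫ z in ball y r, ‖y - z‖ ^ ((2:ℝ) - n) =
      ∫ w in ball (0:Evec n) r, ‖w‖ ^ ((2:ℝ) - n) := by
    rw [← hpre]
    exact mp.setIntegral_preimage_emb emb (fun w => ‖w‖ ^ ((2:ℝ) - n)) _
  rw [htrans]
  have hscale := Measure.setIntegral_comp_smul_of_pos (volume : Measure (Evec n))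
    (fun w : Evec n => ‖w‖ ^ ((2:ℝ) - n)) (ball (0:Evec n) 1) hr
  rw [smul_unitBall_of_pos hr] at hscale
  have heq : ∀ x : Evec n, ‖r • x‖ ^ ((2:ℝ) - n) = r ^ ((2:ℝ) - n) * ‖x‖ ^ ((2:ℝ) - n) := by
    intro x
    rw [norm_smul, Real.norm_eq_abs, abs_of_pos hr, Real.mul_rpow hr.le (norm_nonneg x)]
  calc ∫ w in ball (0:Evec n) r, ‖w‖ ^ ((2:ℝ) - n)
      = (r ^ Module.finrank ℝ (Evec n)) * ∫ x in ball (0:Evec n) 1, ‖r • x‖ ^ ((2:ℝ) - n) := by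
        rw [hscale, smul_eq_mul, ← mul_assoc, mul_inv_cancel₀ (by positivity), one_mul]
    _ = r ^ (2:ℝ) * ∫ w in ball (0:Evec n) 1, ‖w‖ ^ ((2:ℝ) - n) := by
        simp_rw [heq]
        rw [integral_const_mul, hfin, ← mul_assoc]
        congr 1
        rw [← Real.rpow_natCast r n, ← Real.rpow_add hr]
        congr 1
        ring

end GreenAux


/-- Green-representation kernel estimates (Step 6.4): for a nonnegative `f` with
`f(x) ≤ C(1+|x|)^{-α(2*-1)}`, `α < n-2`, `α(2*-1)+s > n`, and `|y|` large, the far part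
of the Newtonian potential is `O(|y|^{2-n})` and the near part is
`O(|y|^{2-n}·|y|^{n-s-α(2*-1)}) = o(|y|^{2-n})`. -/
theorem green_kernel_estimates (n : ℕ) [NeZero n] (hn : 3 ≤ n)
    (s : ℝ) (hs : s ∈ Ioo (0 : ℝ) 2)
    (q : ℝ) (hq : q = 2 * ((n : ℝ) - s) / ((n : ℝ) - 2))
    (α : ℝ) (hα : α < (n : ℝ) - 2) (hαs : (n : ℝ) < α * (q - 1) + s)
    (f : Evec n → ℝ) (hf_meas : Measurable f) (hf_nonneg : ∀ x, 0 ≤ f x)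
    (C : ℝ) (hC : 0 < C)
    (hf_bound : ∀ x ∈ negHalf n, f x ≤ C * (1 + ‖x‖) ^ (-(α * (q - 1)))) :
    ∃ R C' C'' : ℝ, 0 < R ∧ 0 < C' ∧ 0 < C'' ∧
      ∀ y ∈ negHalf n, R ≤ ‖y‖ →
        (∫ z in negHalf n ∩ {z : Evec n | ‖y‖ / 2 ≤ ‖y - z‖},
            ‖y - z‖ ^ ((2 : ℝ) - n) * f z / ‖z‖ ^ s) ≤ C' * ‖y‖ ^ ((2 : ℝ) - n) ∧
        (∫ z in negHalf n ∩ {z : Evec n | ‖y - z‖ < ‖y‖ / 2},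
            ‖y - z‖ ^ ((2 : ℝ) - n) * f z / ‖z‖ ^ s) ≤
          C'' * ‖y‖ ^ ((2 : ℝ) - n) * ‖y‖ ^ ((n : ℝ) - s - α * (q - 1)) := by
  obtain ⟨hs0, hs2⟩ := hs
  have hn3 : (3:ℝ) ≤ n := by exact_mod_cast hn
  set β := α * (q - 1) with hβdef
  have hβs : (n:ℝ) < β + s := by rw [hβdef]; linarith
  have hβ0 : 0 < β := by linarith
  have hsn : s < (n:ℝ) := by linarith
  have hp_neg : (2:ℝ) - n ≤ 0 := by linarith
  set g : Evec n → ℝ := fun z => (1 + ‖z‖) ^ (-β) * ‖z‖ ^ (-s) with hgdef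
  have hg_int : Integrable g volume := aux_g_integrable n hβ0 hs0 hsn hβs
  have hg_nonneg : ∀ z : Evec n, 0 ≤ g z := fun z =>
    mul_nonneg (Real.rpow_nonneg (by positivity) _) (Real.rpow_nonneg (norm_nonneg z) _)
  set I := ∫ z : Evec n, g z with hIdef
  have hI0 : 0 ≤ I := integral_nonneg hg_nonneg
  set K := ∫ w in ball (0:Evec n) 1, ‖w‖ ^ ((2:ℝ) - n) with hKdef
  have hK0 : 0 ≤ K :=
    setIntegral_nonneg measurableSet_ball fun w _ => Real.rpow_nonneg (norm_nonneg w) _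
  have hmeas0 : Measurable fun x : Evec n => x 0 :=
    (EuclideanSpace.proj (0 : Fin n)).continuous.measurable
  have hNH : MeasurableSet (negHalf n) :=
    measurableSet_lt hmeas0 measurable_const
  have h2pos : (0:ℝ) < 2 ^ ((n:ℝ) - 2) := Real.rpow_pos_of_pos two_pos _
  have h2pos' : (0:ℝ) < 2 ^ (β + s) := Real.rpow_pos_of_pos two_pos _
  refine ⟨1, 2 ^ ((n:ℝ) - 2) * C * (I + 1), C * (K + 1) * 2 ^ (β + s), one_pos,
    by positivity, by positivity, ?_⟩
  intro y hy hRy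
  have hy0 : (0:ℝ) < ‖y‖ := lt_of_lt_of_le one_pos hRy
  have hy2 : (0:ℝ) < ‖y‖ / 2 := by linarith
  constructor
  · -- far part
    have hSmeas : MeasurableSet (negHalf n ∩ {z : Evec n | ‖y‖ / 2 ≤ ‖y - z‖}) :=
      hNH.inter (measurableSet_le measurable_const ((measurable_const.sub measurable_id).norm))
    have hbound : ∀ z ∈ negHalf n ∩ {z : Evec n | ‖y‖ / 2 ≤ ‖y - z‖},
        ‖y - z‖ ^ ((2:ℝ) - n) * f z / ‖z‖ ^ s ≤ (‖y‖/2) ^ ((2:ℝ) - n) * (C * g z) := by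
      intro z hz
      by_cases hz0 : ‖z‖ = 0
      · simp [hz0, hgdef, Real.zero_rpow hs0.ne', Real.zero_rpow (by linarith : -s ≠ 0)]
      have hz0' : (0:ℝ) < ‖z‖ := lt_of_le_of_ne (norm_nonneg z) (Ne.symm hz0)
      have h1 : ‖y - z‖ ^ ((2:ℝ) - n) ≤ (‖y‖/2) ^ ((2:ℝ) - n) :=
        Real.rpow_le_rpow_of_nonpos hy2 hz.2 hp_neg
      have h2 : f z / ‖z‖ ^ s ≤ C * g z := by
        have hrw : C * g z = (C * (1 + ‖z‖) ^ (-β)) / ‖z‖ ^ s := by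
          rw [hgdef]
          simp only []
          rw [Real.rpow_neg (norm_nonneg z)]
          ring
        rw [hrw]
        gcongr
        exact hf_bound z hz.1
      rw [mul_div_assoc]
      exact mul_le_mul h1 h2
        (div_nonneg (hf_nonneg z) (Real.rpow_nonneg (norm_nonneg z) _))
        (Real.rpow_nonneg hy2.le _)
    calc (∫ z in negHalf n ∩ {z : Evec n | ‖y‖ / 2 ≤ ‖y - z‖},
            ‖y - z‖ ^ ((2:ℝ) - n) * f z / ‖z‖ ^ s)
        ≤ ∫ z in negHalf n ∩ {z : Evec n | ‖y‖ / 2 ≤ ‖y - z‖},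
            (‖y‖/2) ^ ((2:ℝ) - n) * (C * g z) := by
          refine integral_mono_of_nonneg (ae_of_all _ fun z => ?_)
            (((hg_int.const_mul C).const_mul ((‖y‖/2) ^ ((2:ℝ) - n))).restrict)
            ((ae_restrict_iff' hSmeas).2 (ae_of_all _ hbound))
          exact div_nonneg (mul_nonneg (Real.rpow_nonneg (norm_nonneg _) _) (hf_nonneg z))
            (Real.rpow_nonneg (norm_nonneg z) _)
      _ = (‖y‖/2) ^ ((2:ℝ) - n) * C * ∫ z in negHalf n ∩ {z : Evec n | ‖y‖ / 2 ≤ ‖y - z‖},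
            g z := by
          rw [integral_const_mul, integral_const_mul, mul_assoc]
      _ ≤ (‖y‖/2) ^ ((2:ℝ) - n) * C * I := by
          have hle : (∫ z in negHalf n ∩ {z : Evec n | ‖y‖ / 2 ≤ ‖y - z‖}, g z) ≤ I :=
            setIntegral_le_integral hg_int (ae_of_all _ hg_nonneg)
          have hfac : (0:ℝ) ≤ (‖y‖/2) ^ ((2:ℝ) - n) * C :=
            mul_nonneg (Real.rpow_nonneg hy2.le _) hC.le
          exact mul_le_mul_of_nonneg_left hle hfac
      _ ≤ 2 ^ ((n:ℝ) - 2) * C * (I + 1) * ‖y‖ ^ ((2:ℝ) - n) := by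
          have hhalf : (‖y‖/2) ^ ((2:ℝ) - n) = ‖y‖ ^ ((2:ℝ) - n) * 2 ^ ((n:ℝ) - 2) := by
            rw [Real.div_rpow (norm_nonneg y) (by norm_num : (0:ℝ) ≤ 2), div_eq_mul_inv,
              ← Real.rpow_neg (by norm_num : (0:ℝ) ≤ 2), neg_sub]
          rw [hhalf]
          calc ‖y‖ ^ ((2:ℝ) - n) * 2 ^ ((n:ℝ) - 2) * C * I
              ≤ ‖y‖ ^ ((2:ℝ) - n) * 2 ^ ((n:ℝ) - 2) * C * (I + 1) := by
                refine mul_le_mul_of_nonneg_left (by linarith) ?_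
                exact mul_nonneg (mul_nonneg (Real.rpow_nonneg (norm_nonneg y) _) h2pos.le) hC.le
            _ = 2 ^ ((n:ℝ) - 2) * C * (I + 1) * ‖y‖ ^ ((2:ℝ) - n) := by ring
  · -- near part
    have hker := aux_kernel_ball n hn y hy2
    have hsub : negHalf n ∩ {z : Evec n | ‖y - z‖ < ‖y‖ / 2} ⊆ ball y (‖y‖/2) := by
      intro z hz
      rw [mem_ball, dist_eq_norm, norm_sub_rev]
      exact hz.2
    have hS'meas : MeasurableSet (negHalf n ∩ {z : Evec n | ‖y - z‖ < ‖y‖ / 2}) :=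
      hNH.inter (measurableSet_lt ((measurable_const.sub measurable_id).norm) measurable_const)
    set M := C * (‖y‖/2) ^ (-(β + s)) with hMdef
    have hM0 : (0:ℝ) ≤ M := mul_nonneg hC.le (Real.rpow_nonneg hy2.le _)
    have hbound : ∀ z ∈ negHalf n ∩ {z : Evec n | ‖y - z‖ < ‖y‖ / 2},
        ‖y - z‖ ^ ((2:ℝ) - n) * f z / ‖z‖ ^ s ≤ M * ‖y - z‖ ^ ((2:ℝ) - n) := by
      intro z hz
      have hz2 : ‖y - z‖ < ‖y‖/2 := hz.2
      have hzn : ‖y‖/2 < ‖z‖ := by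
        have h := norm_sub_norm_le y z
        linarith
      have hz0 : (0:ℝ) < ‖z‖ := lt_trans hy2 hzn
      have key : f z / ‖z‖ ^ s ≤ M := by
        have eβs : -β - s = -(β + s) := by ring
        calc f z / ‖z‖ ^ s ≤ (C * ‖z‖ ^ (-β)) / ‖z‖ ^ s := by
              gcongr
              calc f z ≤ C * (1 + ‖z‖) ^ (-β) := hf_bound z hz.1
                  _ ≤ C * ‖z‖ ^ (-β) := mul_le_mul_of_nonneg_left
                      (Real.rpow_le_rpow_of_nonpos hz0 (by linarith) (by linarith)) hC.le
          _ = C * (‖z‖ ^ (-β) / ‖z‖ ^ s) := by rw [mul_div_assoc]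
          _ = C * ‖z‖ ^ (-(β + s)) := by rw [← Real.rpow_sub hz0, eβs]
          _ ≤ M := by
              rw [hMdef]
              exact mul_le_mul_of_nonneg_left
                (Real.rpow_le_rpow_of_nonpos hy2 hzn.le (by linarith)) hC.le
      calc ‖y - z‖ ^ ((2:ℝ) - n) * f z / ‖z‖ ^ s
          = ‖y - z‖ ^ ((2:ℝ) - n) * (f z / ‖z‖ ^ s) := mul_div_assoc _ _ _
        _ ≤ ‖y - z‖ ^ ((2:ℝ) - n) * M :=
            mul_le_mul_of_nonneg_left key (Real.rpow_nonneg (norm_nonneg _) _)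
        _ = M * ‖y - z‖ ^ ((2:ℝ) - n) := mul_comm _ _
    calc (∫ z in negHalf n ∩ {z : Evec n | ‖y - z‖ < ‖y‖ / 2},
            ‖y - z‖ ^ ((2:ℝ) - n) * f z / ‖z‖ ^ s)
        ≤ ∫ z in negHalf n ∩ {z : Evec n | ‖y - z‖ < ‖y‖ / 2},
            M * ‖y - z‖ ^ ((2:ℝ) - n) := by
          refine integral_mono_of_nonneg (ae_of_all _ fun z => ?_)
            ((hker.1.mono_set hsub).const_mul M)
            ((ae_restrict_iff' hS'meas).2 (ae_of_all _ hbound))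
          exact div_nonneg (mul_nonneg (Real.rpow_nonneg (norm_nonneg _) _) (hf_nonneg z))
            (Real.rpow_nonneg (norm_nonneg z) _)
      _ ≤ ∫ z in ball y (‖y‖/2), M * ‖y - z‖ ^ ((2:ℝ) - n) := by
          refine setIntegral_mono_set (hker.1.const_mul M)
            (ae_of_all _ fun z => mul_nonneg hM0 (Real.rpow_nonneg (norm_nonneg _) _))
            (HasSubset.Subset.eventuallyLE hsub)
      _ = M * ((‖y‖/2) ^ (2:ℝ) * K) := by rw [integral_const_mul, hker.2]
      _ ≤ C * (K + 1) * 2 ^ (β + s) * ‖y‖ ^ ((2:ℝ) - n) * ‖y‖ ^ ((n:ℝ) - s - β) := by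
          have hy_comb : ‖y‖ ^ ((2:ℝ) - n) * ‖y‖ ^ ((n:ℝ) - s - β)
              = ‖y‖ ^ (-(β + s) + 2) := by
            rw [← Real.rpow_add hy0]
            congr 1
            ring
          have hr_comb : M * ((‖y‖/2) ^ (2:ℝ) * K) = C * K * (‖y‖/2) ^ (-(β + s) + 2) := by
            rw [hMdef, Real.rpow_add hy2]
            ring
          have hr_split : (‖y‖/2) ^ (-(β + s) + 2)
              = ‖y‖ ^ (-(β + s) + 2) * 2 ^ (β + s - 2) := by
            have e2 : -(-(β + s) + 2) = β + s - 2 := by ring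
            rw [Real.div_rpow (norm_nonneg y) (by norm_num : (0:ℝ) ≤ 2), div_eq_mul_inv,
              ← Real.rpow_neg (by norm_num : (0:ℝ) ≤ 2), e2]
          rw [hr_comb, hr_split, mul_assoc (C * (K + 1) * 2 ^ (β + s)), hy_comb]
          have h2le : (2:ℝ) ^ (β + s - 2) ≤ 2 ^ (β + s) :=
            Real.rpow_le_rpow_of_exponent_le one_le_two (by linarith)
          calc C * K * (‖y‖ ^ (-(β + s) + 2) * 2 ^ (β + s - 2))
              = C * K * 2 ^ (β + s - 2) * ‖y‖ ^ (-(β + s) + 2) := by ring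
            _ ≤ C * (K + 1) * 2 ^ (β + s) * ‖y‖ ^ (-(β + s) + 2) := by
                refine mul_le_mul_of_nonneg_right ?_ (Real.rpow_nonneg (norm_nonneg y) _)
                refine mul_le_mul ?_ h2le (Real.rpow_pos_of_pos two_pos _).le ?_
                · exact mul_le_mul_of_nonneg_left (by linarith) hC.le
                · exact mul_nonneg hC.le (by linarith)


end
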